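/- Let f : ℝ² → ℝ² be a homeomorphism admitting a Lyapunov metric function U satisfying the both-signs condition. Fix x ∈ ℝ² and k > 0, and let A be a bounded open subset of ℝ² with x ∈ A ⊆ B_k(x), where B_k(x) is the connected component containing x of {w : U(x,w) ≤ k}. Then there exists a compact connected set C with x ∈ C ⊆ closure(A) and C ∩ ∂A ≠ ∅ such that U(fⁿ(x),fⁿ(y)) ≤ k for every y ∈ C and every integer n ≥ 0. -/

import Mathlib

/-- First difference of `U` along the dynamics of `f`:
`V(x,y) = U(f(x),f(y)) − U(x,y)`. -/
def Vd (f : Equiv.Perm (ℝ × ℝ)) (U : ℝ × ℝ → ℝ × ℝ → ℝ) (x y : ℝ × ℝ) : ℝ :=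
  U (f x) (f y) - U x y

/-- Second difference of `U` along the dynamics of `f`:
`W(x,y) = U(f²(x),f²(y)) − 2·U(f(x),f(y)) + U(x,y)`. -/
def Wd (f : Equiv.Perm (ℝ × ℝ)) (U : ℝ × ℝ → ℝ × ℝ → ℝ) (x y : ℝ × ℝ) : ℝ :=
  U (f (f x)) (f (f y)) - 2 * U (f x) (f y) + U x y

/-- `U` is a Lyapunov metric function for `f`: a continuous metric on the plane
inducing the same topology as the Euclidean one, whose second difference along
`f` is strictly positive off the diagonal. -/
def IsLyapunovMetric (f : Equiv.Perm (ℝ × ℝ)) (U : ℝ × ℝ → ℝ × ℝ → ℝ) : Prop :=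
  Continuous (fun z : (ℝ × ℝ) × (ℝ × ℝ) => U z.1 z.2) ∧
  (∀ x y, 0 ≤ U x y) ∧ (∀ x y, U x y = U y x) ∧
  (∀ x y, U x y = 0 ↔ x = y) ∧
  (∀ x y z, U x z ≤ U x y + U y z) ∧
  (∀ x : ℝ × ℝ, ∀ ε > (0:ℝ), ∃ δ > (0:ℝ), ∀ y, dist x y < δ → U x y < ε) ∧
  (∀ x : ℝ × ℝ, ∀ ε > (0:ℝ), ∃ δ > (0:ℝ), ∀ y, U x y < δ → dist x y < ε) ∧
  (∀ x y : ℝ × ℝ, x ≠ y → 0 < Wd f U x y)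

/-- `B_k(x)`: the connected component containing `x` of `{w : U(x,w) ≤ k}`. -/
def Bk (U : ℝ × ℝ → ℝ × ℝ → ℝ) (k : ℝ) (x : ℝ × ℝ) : Set (ℝ × ℝ) :=
  connectedComponentIn {w : ℝ × ℝ | U x w ≤ k} x

/-- The both-signs condition: on the boundary of every `B_k(x)` the first
difference takes both a positive and a negative value. -/
def BothSigns (f : Equiv.Perm (ℝ × ℝ)) (U : ℝ × ℝ → ℝ × ℝ → ℝ) : Prop :=
  ∀ x : ℝ × ℝ, ∀ k > (0:ℝ),
    (∃ y ∈ frontier (Bk U k x), 0 < Vd f U x y) ∧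
    (∃ z ∈ frontier (Bk U k x), Vd f U x z < 0)

/-!
Let `S n` be the set of points of `closure A` whose orbit stays `U`-within `k` of the orbit of `x`
up to time `n`, and `C n` the component of `x` in the compact set `S n`. The continuum is
`⋂ n, C n`; it suffices that every `C n` meets `∂A`.

If `C n` missed `∂A`, a relatively clopen piece `D ∋ x` of `S n` would lie in `A`. At a frontier
point `y` of `D` some `uⱼ = U(fʲx, fʲy)` with `1 ≤ j ≤ n` equals `k`; since `W > 0` makes `j ↦ uⱼ`
strictly convex, this forces `u_{n+1} > k`. Hence `f^{n+1}(D)` contains `B_k(f^{n+1}x)`, and the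
both-signs condition gives `y ∈ D` with `u_{n+1} = k > u_{n+2}` while `u_n ≤ k`, contradicting
convexity.
-/

open Set

section Topology

variable {X : Type*} [TopologicalSpace X]

theorem IsPreconnected.subset_of_disjoint_frontier {s t : Set X} (hs : IsPreconnected s)
    (hst : (s ∩ t).Nonempty) (hd : Disjoint s (frontier t)) : s ⊆ t := by
  have hint : s ∩ closure t ⊆ interior t := fun z hz => by
    by_contra hzi
    exact hd.ne_of_mem hz.1 ⟨hz.2, hzi⟩ rfl
  refine (hs.subset_of_closure_inter_subset isOpen_interior ?_ ?_).trans interior_subset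
  · obtain ⟨z, hzs, hzt⟩ := hst
    exact ⟨z, hzs, hint ⟨hzs, subset_closure hzt⟩⟩
  · rw [inter_comm]
    exact (inter_subset_inter_right _ (closure_mono interior_subset)).trans hint

protected theorem IsClosed.connectedComponentIn {F : Set X} (hF : IsClosed F) (x : X) :
    IsClosed (connectedComponentIn F x) := by
  by_cases hx : x ∈ F
  · exact isClosed_of_closure_subset <|
      isPreconnected_connectedComponentIn.closure.subset_connectedComponentIn
        (subset_closure (mem_connectedComponentIn hx))
        (closure_minimal (connectedComponentIn_subset F x) hF)
  · rw [connectedComponentIn_eq_empty hx]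
    exact isClosed_empty

protected theorem IsCompact.connectedComponentIn [T2Space X] {K : Set X} (hK : IsCompact K)
    (x : X) : IsCompact (connectedComponentIn K x) :=
  hK.of_isClosed_subset (hK.isClosed.connectedComponentIn x) (connectedComponentIn_subset K x)

theorem frontier_connectedComponentIn_sublevel_subset [LocallyConnectedSpace X] {g : X → ℝ}
    (hg : Continuous g) (k : ℝ) (x : X) :
    frontier (connectedComponentIn {z | g z ≤ k} x) ⊆ {z | g z = k} := by
  set B := connectedComponentIn {z | g z ≤ k} x
  intro w hw
  have hle : g w ≤ k := closure_minimal (connectedComponentIn_subset _ _)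
    (isClosed_le hg continuous_const) hw.1
  refine hle.eq_or_lt.resolve_right fun hlt => hw.2 ?_
  obtain ⟨V, hVlt, hVopen, hwV, hVconn⟩ := locallyConnectedSpace_iff_subsets_isOpen_isConnected.mp
    ‹_› w _ ((isOpen_lt hg continuous_const).mem_nhds hlt)
  obtain ⟨p, hpV, hpB⟩ := mem_closure_iff.mp hw.1 V hVopen hwV
  have hxB : x ∈ B := connectedComponentIn_nonempty_iff.mp ⟨p, hpB⟩ |> mem_connectedComponentIn
  have hVB : V ∪ B ⊆ B :=
    (hVconn.isPreconnected.union p hpV hpB isPreconnected_connectedComponentIn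
      ).subset_connectedComponentIn (Or.inr hxB)
      (union_subset (fun z hz => show g z ≤ k from (hVlt hz).le) (connectedComponentIn_subset _ _))
  exact mem_interior.mpr ⟨V, subset_union_left.trans hVB, hVopen, hwV⟩

theorem frontier_inter_subset_of_isOpen {K O : Set X} (hO : IsOpen O) (hKO : IsClosed (K ∩ O)) :
    frontier (K ∩ O) ⊆ frontier K := by
  intro y hy
  have hyO : y ∈ O := (hKO.frontier_subset hy).2
  rcases frontier_inter_subset K O hy with h | h
  · exact h.1
  · exact absurd (hO.inter_frontier_eq.subset ⟨hyO, h.2⟩) (notMem_empty y)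

theorem exists_isClopen_mem_disjoint [CompactSpace X] [T2Space X] {F : Set X} (hF : IsClosed F)
    {x : X} (h : Disjoint (connectedComponent x) F) : ∃ Z, IsClopen Z ∧ x ∈ Z ∧ Disjoint Z F := by
  have hdir : Directed (· ⊇ ·) (fun Z : {Z : Set X // IsClopen Z ∧ x ∈ Z} => (Z : Set X)) :=
    fun Z₁ Z₂ => ⟨⟨Z₁ ∩ Z₂, Z₁.2.1.inter Z₂.2.1, Z₁.2.2, Z₂.2.2⟩, inter_subset_left,
      inter_subset_right⟩
  have : Nonempty {Z : Set X // IsClopen Z ∧ x ∈ Z} := ⟨⟨univ, isClopen_univ, mem_univ x⟩⟩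
  obtain ⟨⟨Z, hZ, hxZ⟩, hZF⟩ := exists_subset_nhds_of_compactSpace hdir (fun Z => Z.2.1.isClosed)
    (U := Fᶜ) fun z hz => hF.isOpen_compl.mem_nhds <|
      h.notMem_of_mem_left (by rwa [connectedComponent_eq_iInter_isClopen])
  exact ⟨Z, hZ, hxZ, subset_compl_iff_disjoint_right.mp hZF⟩

theorem IsCompact.exists_subset_disjoint_frontier_subset [T2Space X] {K F : Set X}
    (hK : IsCompact K) (hF : IsClosed F) {x : X} (hx : x ∈ K)
    (h : Disjoint (connectedComponentIn K x) F) :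
    ∃ D ⊆ K, x ∈ D ∧ IsCompact D ∧ Disjoint D F ∧ frontier D ⊆ frontier K := by
  have : CompactSpace K := isCompact_iff_compactSpace.mp hK
  obtain ⟨Z, hZ, hxZ, hZF⟩ := exists_isClopen_mem_disjoint (x := ⟨x, hx⟩)
    (hF.preimage continuous_subtype_val) <| by
      rw [connectedComponentIn_eq_image hx] at h
      exact disjoint_left.2 fun z hz hzF => disjoint_left.1 h (mem_image_of_mem _ hz) hzF
  obtain ⟨O, hO, rfl⟩ := isOpen_induced_iff.mp hZ.isOpen
  have hD : IsCompact (K ∩ O) := by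
    rw [← Subtype.image_preimage_coe]
    exact hZ.isClosed.isCompact.image continuous_subtype_val
  refine ⟨K ∩ O, inter_subset_left, ⟨hx, hxZ⟩, hD, ?_,
    frontier_inter_subset_of_isOpen hO hD.isClosed⟩
  exact disjoint_left.2 fun z hz hzF =>
    disjoint_left.1 hZF (show (⟨z, hz.1⟩ : K) ∈ Subtype.val ⁻¹' O from hz.2) hzF

theorem isPreconnected_iInter_of_directed [T2Space X] {ι : Type*} [Nonempty ι] {K : ι → Set X}
    (hd : Directed (· ⊇ ·) K) (hc : ∀ i, IsCompact (K i)) (hp : ∀ i, IsPreconnected (K i)) :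
    IsPreconnected (⋂ i, K i) := by
  have hcl : IsClosed (⋂ i, K i) := isClosed_iInter fun i => (hc i).isClosed
  have hcpt : IsCompact (⋂ i, K i) :=
    (hc (Classical.arbitrary ι)).of_isClosed_subset hcl (iInter_subset _ _)
  rw [isPreconnected_iff_subset_of_fully_disjoint_closed hcl]
  intro a b ha hb hab hdisj
  obtain ⟨u, v, hu, hv, hau, hbv, huv⟩ := SeparatedNhds.of_isCompact_isCompact
    (hcpt.inter_left ha) (hcpt.inter_left hb) (hdisj.mono inter_subset_left inter_subset_left)
  obtain ⟨i, hi⟩ := exists_subset_nhds_of_isCompact hd hc (U := u ∪ v) fun z hz =>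
    (hu.union hv).mem_nhds <| (hab hz).imp (fun h => hau ⟨h, hz⟩) (fun h => hbv ⟨h, hz⟩)
  refine ((hp i).subset_or_subset hu hv huv hi).imp (fun hiu z hz => ?_) (fun hiv z hz => ?_)
  · exact (hab hz).resolve_right fun hzb =>
      huv.ne_of_mem (hiu (mem_iInter.mp hz i)) (hbv ⟨hzb, hz⟩) rfl
  · exact (hab hz).resolve_left fun hza =>
      huv.ne_of_mem (hau ⟨hza, hz⟩) (hiv (mem_iInter.mp hz i)) rfl

theorem isHomeomorph_coe_pow (f : Equiv.Perm X) (hf : Continuous f) (hf' : Continuous f.symm)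
    (n : ℕ) : IsHomeomorph ⇑(f ^ n) := by
  induction n with
  | zero => exact IsHomeomorph.id
  | succ n ih =>
    rw [pow_succ', Equiv.Perm.coe_mul]
    exact (Homeomorph.mk f hf hf').isHomeomorph.comp ih

end Topology

theorem lt_apply_add_one_of_apply_eq {u : ℕ → ℝ} (hu : ∀ j, 2 * u (j + 1) < u (j + 2) + u j)
    {n j : ℕ} {k : ℝ} (hle : ∀ i ≤ n, u i ≤ k) (hj : j ≠ 0) (hjn : j ≤ n) (hjk : u j = k) :
    k < u (n + 1) := by
  obtain ⟨m, rfl⟩ := Nat.exists_eq_add_one_of_ne_zero hj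
  have hconv := hu m
  have hm := hle m (by omega)
  rcases hjn.lt_or_eq with hlt | rfl
  · have := hle (m + 2) hlt
    linarith
  · linarith

section Lyapunov

variable {f : Equiv.Perm (ℝ × ℝ)} {U : ℝ × ℝ → ℝ × ℝ → ℝ}

def orbitDist (f : Equiv.Perm (ℝ × ℝ)) (U : ℝ × ℝ → ℝ × ℝ → ℝ) (x y : ℝ × ℝ) (n : ℕ) : ℝ :=
  U ((f ^ n) x) ((f ^ n) y)

theorem orbitDist_succ (x y : ℝ × ℝ) (n : ℕ) :
    orbitDist f U x y (n + 1) = U (f ((f ^ n) x)) (f ((f ^ n) y)) := by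
  simp only [orbitDist, pow_succ', Equiv.Perm.mul_apply]

theorem IsLyapunovMetric.continuous_apply (hU : IsLyapunovMetric f U) (p : ℝ × ℝ) :
    Continuous (U p) :=
  hU.1.comp (Continuous.prodMk_right p)

theorem IsLyapunovMetric.apply_self (hU : IsLyapunovMetric f U) (p : ℝ × ℝ) : U p p = 0 :=
  (hU.2.2.2.1 p p).mpr rfl

theorem IsLyapunovMetric.orbitDist_self (hU : IsLyapunovMetric f U) (x : ℝ × ℝ) (n : ℕ) :
    orbitDist f U x x n = 0 :=
  hU.apply_self _

theorem IsLyapunovMetric.continuous_orbitDist (hU : IsLyapunovMetric f U) (hf : Continuous f)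
    (x : ℝ × ℝ) (n : ℕ) : Continuous fun y => orbitDist f U x y n := by
  simp only [orbitDist, Equiv.Perm.coe_pow]
  exact (hU.continuous_apply _).comp (hf.iterate n)

theorem IsLyapunovMetric.two_mul_orbitDist_lt (hU : IsLyapunovMetric f U) {x y : ℝ × ℝ}
    (hxy : x ≠ y) (n : ℕ) :
    2 * orbitDist f U x y (n + 1) < orbitDist f U x y (n + 2) + orbitDist f U x y n := by
  obtain ⟨-, -, -, -, -, -, -, hW⟩ := hU
  have hW := hW _ _ ((f ^ n).injective.ne hxy)
  simp only [Wd] at hW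
  simp only [orbitDist, show n + 2 = n + 1 + 1 from rfl, pow_succ', Equiv.Perm.mul_apply]
  linarith

theorem BothSigns.exists_eq_and_apply_lt (hBS : BothSigns f U) (hU : IsLyapunovMetric f U)
    {p : ℝ × ℝ} {k : ℝ} (hk : 0 < k) {E : Set (ℝ × ℝ)} (hE : IsClosed E) (hpE : p ∈ E)
    (hfr : ∀ z ∈ frontier E, k < U p z) : ∃ w ∈ E, U p w = k ∧ U (f p) (f w) < k := by
  have hpB : p ∈ Bk U k p := mem_connectedComponentIn (by simp [hU.apply_self, hk.le])
  have hBE : Bk U k p ⊆ E := isPreconnected_connectedComponentIn.subset_of_disjoint_frontier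
    ⟨p, hpB, hpE⟩ (disjoint_left.2 fun z hzB hzfr =>
      (hfr z hzfr).not_ge (connectedComponentIn_subset _ _ hzB : z ∈ {w | U p w ≤ k}))
  obtain ⟨-, w, hw, hVw⟩ := hBS p k hk
  have hwk : U p w = k :=
    frontier_connectedComponentIn_sublevel_subset (hU.continuous_apply p) k p hw
  refine ⟨w, closure_minimal hBE hE hw.1, hwk, ?_⟩
  rw [Vd] at hVw
  linarith

def orbitSublevel (f : Equiv.Perm (ℝ × ℝ)) (U : ℝ × ℝ → ℝ × ℝ → ℝ) (x : ℝ × ℝ) (k : ℝ)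
    (n : ℕ) : Set (ℝ × ℝ) :=
  {y | ∀ j ≤ n, orbitDist f U x y j ≤ k}

theorem antitone_orbitSublevel (x : ℝ × ℝ) (k : ℝ) : Antitone (orbitSublevel f U x k) :=
  fun _ _ hmn _ hy j hj => hy j (hj.trans hmn)

theorem IsLyapunovMetric.mem_orbitSublevel_self (hU : IsLyapunovMetric f U) {k : ℝ} (hk : 0 ≤ k)
    (x : ℝ × ℝ) (n : ℕ) : x ∈ orbitSublevel f U x k n :=
  fun j _ => (hU.orbitDist_self x j).trans_le hk

theorem IsLyapunovMetric.isClosed_orbitSublevel (hU : IsLyapunovMetric f U) (hf : Continuous f)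
    (x : ℝ × ℝ) (k : ℝ) (n : ℕ) : IsClosed (orbitSublevel f U x k n) := by
  simp only [orbitSublevel, ofPred_forall]
  exact isClosed_iInter fun j => isClosed_iInter fun _ =>
    isClosed_le (hU.continuous_orbitDist hf x j) continuous_const

theorem IsLyapunovMetric.lt_orbitDist_of_mem_frontier (hU : IsLyapunovMetric f U)
    (hf : Continuous f) {x : ℝ × ℝ} {k : ℝ} (hk : 0 < k) {A : Set (ℝ × ℝ)} (hA : IsOpen A)
    (hAk : A ⊆ {y | U x y ≤ k}) {n : ℕ} {y : ℝ × ℝ} (hyA : y ∈ A)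
    (hy : y ∈ frontier (closure A ∩ orbitSublevel f U x k n)) :
    k < orbitDist f U x y (n + 1) := by
  have hyS := (isClosed_closure.inter (hU.isClosed_orbitSublevel hf x k n)).frontier_subset hy
  obtain ⟨j, hj0, hjn, hjk⟩ : ∃ j, j ≠ 0 ∧ j ≤ n ∧ orbitDist f U x y j = k := by
    by_contra! hne
    refine hy.2 (mem_interior.2 ⟨A ∩ ⋂ j ∈ Finset.Icc 1 n, {z | orbitDist f U x z j < k},
      ?_, ?_, ?_⟩)
    · rintro z ⟨hzA, hz⟩
      refine ⟨subset_closure hzA, fun j hj => ?_⟩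
      rcases eq_or_ne j 0 with rfl | hj0
      · simpa [orbitDist] using hAk hzA
      · exact (mem_iInter₂.1 hz j (Finset.mem_Icc.2 ⟨Nat.one_le_iff_ne_zero.2 hj0, hj⟩)).le
    · exact hA.inter (isOpen_biInter_finset fun j _ =>
        isOpen_lt (hU.continuous_orbitDist hf x j) continuous_const)
    · refine ⟨hyA, mem_iInter₂.2 fun j hj => ?_⟩
      obtain ⟨hj1, hjn⟩ := Finset.mem_Icc.1 hj
      exact (hyS.2 j hjn).lt_of_ne (hne j (by omega) hjn)
  have hxy : x ≠ y := by
    rintro rfl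
    exact hk.ne ((hU.orbitDist_self x j).symm.trans hjk)
  exact lt_apply_add_one_of_apply_eq (hU.two_mul_orbitDist_lt hxy) hyS.2 hj0 hjn hjk

theorem IsLyapunovMetric.isCompact_closure_inter_orbitSublevel (hU : IsLyapunovMetric f U)
    (hf : Continuous f) {A : Set (ℝ × ℝ)} (hA : Bornology.IsBounded A) (x : ℝ × ℝ) (k : ℝ)
    (n : ℕ) : IsCompact (closure A ∩ orbitSublevel f U x k n) :=
  hA.isCompact_closure.inter_right (hU.isClosed_orbitSublevel hf x k n)

theorem BothSigns.connectedComponentIn_inter_frontier_nonempty (hBS : BothSigns f U)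
    (hU : IsLyapunovMetric f U) (hf : Continuous f) (hf' : Continuous f.symm) {x : ℝ × ℝ}
    {k : ℝ} (hk : 0 < k) {A : Set (ℝ × ℝ)} (hAo : IsOpen A) (hAb : Bornology.IsBounded A)
    (hxA : x ∈ A) (hAk : A ⊆ {y | U x y ≤ k}) (n : ℕ) :
    (connectedComponentIn (closure A ∩ orbitSublevel f U x k n) x ∩ frontier A).Nonempty := by
  rw [← not_disjoint_iff_nonempty_inter]
  intro hdisj
  obtain ⟨D, hDS, hxD, hD, hDA, hDfr⟩ :=
    (hU.isCompact_closure_inter_orbitSublevel hf hAb x k n).exists_subset_disjoint_frontier_subset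
      isClosed_frontier ⟨subset_closure hxA, hU.mem_orbitSublevel_self hk.le x n⟩ hdisj
  replace hDA : D ⊆ A := fun y hy =>
    ((closure_eq_self_union_frontier A ▸ (hDS hy).1).resolve_right (disjoint_left.1 hDA hy))
  have hg := isHomeomorph_coe_pow f hf hf' (n + 1)
  obtain ⟨_, ⟨y, hyD, rfl⟩, hyk, hy⟩ := hBS.exists_eq_and_apply_lt hU hk
    (hD.image hg.continuous).isClosed (mem_image_of_mem _ hxD) <| by
      rw [← hg.image_frontier]
      rintro _ ⟨z, hz, rfl⟩
      exact hU.lt_orbitDist_of_mem_frontier hf hk hAo hAk (hDA (hD.isClosed.frontier_subset hz))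
        (hDfr hz)
  have h₀ : orbitDist f U x y n ≤ k := (hDS hyD).2 n le_rfl
  have h₁ : orbitDist f U x y (n + 1) = k := hyk
  have h₂ : orbitDist f U x y (n + 2) < k := (orbitDist_succ x y (n + 1)).trans_lt hy
  have hxy : x ≠ y := by
    rintro rfl
    exact hk.ne ((hU.orbitDist_self x _).symm.trans h₁)
  linarith [hU.two_mul_orbitDist_lt hxy n]

end Lyapunov

/-- inside any bounded open neighbourhood `A ⊆ B_k(x)` of `x`
there is a compact connected set joining `x` to the boundary of `A` whose
points stay `U`-within `k` of the orbit of `x` for all forward times. -/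
theorem stable_continuum_reaching_boundary
    (f : Equiv.Perm (ℝ × ℝ)) (hf : Continuous f) (hf' : Continuous f.symm)
    (U : ℝ × ℝ → ℝ × ℝ → ℝ)
    (hU : IsLyapunovMetric f U) (hBS : BothSigns f U)
    (x : ℝ × ℝ) (k : ℝ) (hk : 0 < k)
    (A : Set (ℝ × ℝ)) (hAopen : IsOpen A) (hAbdd : Bornology.IsBounded A)
    (hxA : x ∈ A) (hAB : A ⊆ Bk U k x) :
    ∃ C : Set (ℝ × ℝ), IsCompact C ∧ IsConnected C ∧ x ∈ C ∧
      C ⊆ closure A ∧ (C ∩ frontier A).Nonempty ∧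
      ∀ y ∈ C, ∀ n : ℤ, 0 ≤ n → U ((f ^ n) x) ((f ^ n) y) ≤ k := by
  set C : ℕ → Set (ℝ × ℝ) := fun n =>
    connectedComponentIn (closure A ∩ orbitSublevel f U x k n) x
  have hC : Antitone C := fun m n hmn => connectedComponentIn_mono x
    (inter_subset_inter_right _ (antitone_orbitSublevel x k hmn))
  have hCcpt (n : ℕ) : IsCompact (C n) :=
    (hU.isCompact_closure_inter_orbitSublevel hf hAbdd x k n).connectedComponentIn x
  have hCF (n : ℕ) : (C n ∩ frontier A).Nonempty :=
    hBS.connectedComponentIn_inter_frontier_nonempty hU hf hf' hk hAopen hAbdd hxA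
      (hAB.trans (connectedComponentIn_subset _ _)) n
  have hxC : x ∈ ⋂ n, C n := mem_iInter.2 fun n =>
    mem_connectedComponentIn ⟨subset_closure hxA, hU.mem_orbitSublevel_self hk.le x n⟩
  refine ⟨⋂ n, C n, ?_, ⟨⟨x, hxC⟩, ?_⟩, hxC, ?_, ?_, ?_⟩
  · exact (hCcpt 0).of_isClosed_subset (isClosed_iInter fun n => (hCcpt n).isClosed)
      (iInter_subset _ 0)
  · exact isPreconnected_iInter_of_directed hC.directed_ge hCcpt
      fun n => isPreconnected_connectedComponentIn
  · exact (iInter_subset _ 0).trans ((connectedComponentIn_subset _ _).trans inter_subset_left)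
  · rw [iInter_inter]
    exact IsCompact.nonempty_iInter_of_directed_nonempty_isCompact_isClosed _
      (hC.inter antitone_const).directed_ge hCF (fun n => (hCcpt n).inter_right isClosed_frontier)
      fun n => (hCcpt n).isClosed.inter isClosed_frontier
  · intro y hy n hn
    lift n to ℕ using hn
    exact (connectedComponentIn_subset _ _ (mem_iInter.1 hy n)).2 n le_rfl
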